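/- arXiv:2603.10404 — 2 statements merged into one kernel-verified Lean document; each statement's English description precedes it below -/
import Mathlib

section
/- Let p > 0 and let (u,v) be a classical solution of the system (S₃) on ℝ³ such that u ≥ 0 on ℝ³ and the finite total mass condition ∬_{ℝ³×ℝ³} u²(x)u²(y)/|x−y|² dx dy < ∞ holds. Set α := (1/(2π²)) ∫_{ℝ³} P₃(y) dy (so α ∈ (0,∞)). Then there exist a constant C ∈ ℝ and R > 0 such that for every x with |x| ≥ R: (1/(2π²)) ∫_{ℝ³} P₃(y)·ln(|x−y|/|y|) dy ≤ α·ln|x| + C. -/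
/-!
Positivity of `α`: `u` cannot vanish identically, since then `(−Δ)^{1/2}u ≡ 0 ≠ e^{pv}`; being
continuous, `u` is nonzero on an open set, where `P₃ > 0` because the slice integrals are finite
almost everywhere by the finite mass condition.

The upper bound is pointwise: for `|x| ≥ 2`, `ln(|x−y|/|y|) ≤ ln(2|x|) + ln⁺(1/|y|)`, and
`P₃ · ln⁺(1/|·|)` is dominated by `|P₃ · ln(|x−·|/|·|)|`, hence integrable whenever the left-hand
side is; when it is not, the left-hand integral is `0` by convention and the bound is trivial.
-/

open MeasureTheory Filter Topology
open scoped NNReal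

noncomputable section

abbrev E3 := EuclideanSpace ℝ (Fin 3)

/-- The normalizing constant `C₃ = (∫_{ℝ³} (1 − cos(2πζ₁))/|ζ|⁴ dζ)⁻¹`. -/
def C3 : ℝ := (∫ ζ : E3, (1 - Real.cos (2 * Real.pi * ζ 0)) / ‖ζ‖ ^ 4)⁻¹

/-- The assertion `(−Δ)^{1/2} w (x) = h`, i.e. the principal-value limit exists and equals `h`. -/
def HalfLapEq3 (w : E3 → ℝ) (x : E3) (h : ℝ) : Prop :=
  Tendsto (fun ε : ℝ =>
      C3 * ∫ y in {y : E3 | ε ≤ ‖y - x‖}, (w x - w y) / ‖x - y‖ ^ 4)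
    (𝓝[>] (0 : ℝ)) (𝓝 h)

/-- The Euclidean Laplacian `Δw(x) = ∑ᵢ ∂²w/∂xᵢ²`. -/
def lap3 (w : E3 → ℝ) (x : E3) : ℝ :=
  ∑ i : Fin 3,
    fderiv ℝ (fun z => fderiv ℝ w z (EuclideanSpace.single i 1)) x (EuclideanSpace.single i 1)

/-- Local Hölder continuity of a map `g`. -/
def LocHolder3 {F : Type*} [NormedAddCommGroup F] (g : E3 → F) : Prop :=
  ∀ x : E3, ∃ (C a : ℝ≥0) (r : ℝ), 0 < r ∧ 0 < (a : ℝ) ∧ (a : ℝ) ≤ 1 ∧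
    HolderOnWith C a g (Metric.ball x r)

/-- `P₃(y) = (∫ u²(z)/|y−z|² dz) · u²(y)`. -/
def P3 (u : E3 → ℝ) (y : E3) : ℝ := (∫ z : E3, u z ^ 2 / ‖y - z‖ ^ 2) * u y ^ 2

/-- `(u,v)` is a classical solution of the system (S₃) on ℝ³. -/
structure IsSolution3 (p : ℝ) (u v : E3 → ℝ) : Prop where
  u_C1 : ContDiff ℝ 1 u
  u_grad_holder : LocHolder3 (fderiv ℝ u)
  u_int : Integrable (fun x : E3 => |u x| / (1 + ‖x‖ ^ 4))
  v_C3 : ContDiff ℝ 3 v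
  v_D3_holder : LocHolder3 (iteratedFDeriv ℝ 3 v)
  lapv_int : Integrable (fun x : E3 => |lap3 v x| / (1 + ‖x‖ ^ 4))
  eq_u : ∀ x : E3, HalfLapEq3 u x (Real.exp (p * v x))
  eq_v : ∀ x : E3, HalfLapEq3 (fun z => -lap3 v z) x (P3 u x)

/-- The finite total mass condition `∬ u²(x)u²(y)/|x−y|² dx dy < ∞`. -/
def FiniteMass3 (u : E3 → ℝ) : Prop :=
  Integrable (fun q : E3 × E3 => u q.1 ^ 2 * u q.2 ^ 2 / ‖q.1 - q.2‖ ^ 2)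

open Real Function

section LogKernel

variable {E : Type*} [SeminormedAddCommGroup E] {x y : E}

lemma norm_sub_div_norm_le (hx : 1 ≤ ‖x‖) : ‖x - y‖ / ‖y‖ ≤ 2 * ‖x‖ * max 1 ‖y‖⁻¹ := by
  rcases (norm_nonneg y).eq_or_lt with hy | hy
  · rw [← hy, div_zero]; positivity
  have hM : 1 ≤ max 1 ‖y‖⁻¹ := le_max_left _ _
  calc ‖x - y‖ / ‖y‖ ≤ (‖x‖ + ‖y‖) / ‖y‖ := by gcongr; exact norm_sub_le x y
    _ = ‖x‖ * ‖y‖⁻¹ + 1 := by field_simp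
    _ ≤ ‖x‖ * max 1 ‖y‖⁻¹ + ‖x‖ * max 1 ‖y‖⁻¹ := by
      gcongr
      · exact le_max_right _ _
      · nlinarith
    _ = 2 * ‖x‖ * max 1 ‖y‖⁻¹ := by ring

lemma log_norm_sub_div_norm_le (hx : 1 ≤ ‖x‖) :
    log (‖x - y‖ / ‖y‖) ≤ log (2 * ‖x‖) + log⁺ ‖y‖⁻¹ :=
  calc log (‖x - y‖ / ‖y‖) ≤ log⁺ (‖x - y‖ / ‖y‖) := le_max_right _ _
    _ ≤ log⁺ (2 * ‖x‖ * max 1 ‖y‖⁻¹) :=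
      posLog_le_posLog (by positivity) (norm_sub_div_norm_le hx)
    _ ≤ log⁺ (2 * ‖x‖) + log⁺ (max 1 ‖y‖⁻¹) := posLog_mul
    _ = log (2 * ‖x‖) + log⁺ ‖y‖⁻¹ := by
      rw [posLog_eq_log (by rw [abs_of_nonneg (by positivity)]; linarith),
        posLog_eq_log_max_one (by positivity), posLog_eq_log_max_one (by positivity),
        ← max_assoc, max_self]

lemma posLog_inv_norm_le_abs_log (hx : 2 ≤ ‖x‖) : log⁺ ‖y‖⁻¹ ≤ |log (‖x - y‖ / ‖y‖)| := by
  rcases le_or_gt 1 ‖y‖ with hy | hy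
  · rw [(posLog_eq_zero_iff _).2]
    · exact abs_nonneg _
    · rw [abs_of_nonneg (by positivity)]; exact inv_le_one_of_one_le₀ hy
  rcases (norm_nonneg y).eq_or_lt with hy0 | hy0
  · simp [← hy0]
  have hxy : 1 ≤ ‖x - y‖ := by linarith [norm_sub_norm_le x y]
  calc log⁺ ‖y‖⁻¹ = log ‖y‖⁻¹ :=
        posLog_eq_log (by rw [abs_of_pos (by positivity)]; exact (one_le_inv₀ hy0).2 hy.le)
    _ ≤ log (‖x - y‖ / ‖y‖) := log_le_log (by positivity) (by
        rw [inv_eq_one_div]; gcongr)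
    _ ≤ |log (‖x - y‖ / ‖y‖)| := le_abs_self _

variable [MeasurableSpace E] [OpensMeasurableSpace E] {μ : Measure E} {P : E → ℝ}

lemma integral_mul_log_norm_sub_div_norm_le (hP0 : 0 ≤ P) (hP : Integrable P μ)
    (hx : 2 ≤ ‖x‖) :
    ∫ y, P y * log (‖x - y‖ / ‖y‖) ∂μ ≤
      (∫ y, P y ∂μ) * log (2 * ‖x‖) + ∫ y, P y * log⁺ ‖y‖⁻¹ ∂μ := by
  by_cases hf : Integrable (fun y => P y * log (‖x - y‖ / ‖y‖)) μ
  · have hm : Integrable (fun y => P y * log⁺ ‖y‖⁻¹) μ := by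
      refine hf.norm.mono' (hP.aestronglyMeasurable.mul ?_) (ae_of_all _ fun y => ?_)
      · exact (by fun_prop : Measurable fun y : E => log⁺ ‖y‖⁻¹).aestronglyMeasurable
      rw [norm_of_nonneg (mul_nonneg (hP0 y) posLog_nonneg), norm_mul, norm_of_nonneg (hP0 y)]
      exact mul_le_mul_of_nonneg_left (posLog_inv_norm_le_abs_log hx) (hP0 y)
    calc ∫ y, P y * log (‖x - y‖ / ‖y‖) ∂μ
        ≤ ∫ y, (P y * log (2 * ‖x‖) + P y * log⁺ ‖y‖⁻¹) ∂μ :=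
          integral_mono hf ((hP.mul_const _).add hm) fun y => by
            rw [← mul_add]
            exact mul_le_mul_of_nonneg_left (log_norm_sub_div_norm_le (by linarith)) (hP0 y)
      _ = (∫ y, P y ∂μ) * log (2 * ‖x‖) + ∫ y, P y * log⁺ ‖y‖⁻¹ ∂μ := by
          rw [integral_add (hP.mul_const _) hm, integral_mul_const]
  · rw [integral_undef hf]
    exact add_nonneg (mul_nonneg (integral_nonneg hP0) (log_nonneg (by linarith)))
      (integral_nonneg fun y => mul_nonneg (hP0 y) posLog_nonneg)

end LogKernel

lemma HalfLapEq3.eq_zero_of_const {c : ℝ} {x : E3} {h : ℝ} (H : HalfLapEq3 (fun _ => c) x h) :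
    h = 0 := by
  refine tendsto_nhds_unique H ?_
  simpa only [sub_self, zero_div, integral_zero, mul_zero] using tendsto_const_nhds

section P3

variable {u : E3 → ℝ}

lemma P3_nonneg (u : E3 → ℝ) : 0 ≤ P3 u := fun y =>
  mul_nonneg (integral_nonneg fun z => by positivity) (sq_nonneg _)

lemma P3_eq_integral (u : E3 → ℝ) (y : E3) :
    P3 u y = ∫ z, u y ^ 2 * u z ^ 2 / ‖y - z‖ ^ 2 := by
  rw [P3, mul_comm, ← integral_const_mul]
  simp only [mul_div_assoc]

lemma P3_pos {y : E3} (hsupp : 0 < volume (support u)) (hy : u y ≠ 0)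
    (hint : Integrable fun z => u y ^ 2 * u z ^ 2 / ‖y - z‖ ^ 2) : 0 < P3 u y := by
  rw [P3_eq_integral, integral_pos_iff_support_of_nonneg (fun z => by positivity) hint]
  calc 0 < volume (support u) := hsupp
    _ = volume (support u \ {y}) := (measure_sdiff_null (measure_singleton y)).symm
    _ ≤ _ := measure_mono fun z ⟨hz, hzy⟩ => div_ne_zero
        (mul_ne_zero (pow_ne_zero 2 hy) (pow_ne_zero 2 hz))
        (pow_ne_zero 2 (norm_ne_zero_iff.2 (sub_ne_zero.2 (Ne.symm hzy))))

lemma FiniteMass3.integrable_P3 (hmass : FiniteMass3 u) : Integrable (P3 u) := by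
  rw [FiniteMass3, Measure.volume_eq_prod] at hmass
  simpa only [← P3_eq_integral] using hmass.integral_prod_left

lemma FiniteMass3.integral_P3_pos (hmass : FiniteMass3 u) (hu : Continuous u) (hu0 : u ≠ 0) :
    0 < ∫ y, P3 u y := by
  have hsupp : 0 < volume (support u) :=
    hu.isOpen_support.measure_pos _ (support_nonempty_iff.2 hu0)
  have hslice : ∀ᵐ y, Integrable fun z => u y ^ 2 * u z ^ 2 / ‖y - z‖ ^ 2 := by
    rw [FiniteMass3, Measure.volume_eq_prod] at hmass
    exact hmass.prod_right_ae
  refine (integral_pos_iff_support_of_nonneg (P3_nonneg u) hmass.integrable_P3).2 ?_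
  calc 0 < volume (support u) := hsupp
    _ = volume (support u ∩
          {y | Integrable (fun z => u y ^ 2 * u z ^ 2 / ‖y - z‖ ^ 2) volume}) :=
      (measure_inter_conull (ae_iff.1 hslice)).symm
    _ ≤ _ := measure_mono fun y ⟨hy, hint⟩ => (P3_pos hsupp hy hint).ne'

end P3

theorem stmt5_general (p : ℝ) (u v : E3 → ℝ)
    (hsol : IsSolution3 p u v)
    (hmass : FiniteMass3 u)
    (α : ℝ) (hα : α = 1 / (2 * Real.pi ^ 2) * (∫ y : E3, P3 u y)) :
    0 < α ∧
    ∃ C R : ℝ, 0 < R ∧ ∀ x : E3, R ≤ ‖x‖ →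
      1 / (2 * Real.pi ^ 2) * (∫ y : E3, P3 u y * Real.log (‖x - y‖ / ‖y‖)) ≤
        α * Real.log ‖x‖ + C := by
  have hu0 : u ≠ 0 := by
    rintro rfl
    exact (exp_pos _).ne' (hsol.eq_u 0).eq_zero_of_const
  have hα_pos : 0 < α :=
    hα ▸ mul_pos (by positivity) (hmass.integral_P3_pos hsol.u_C1.continuous hu0)
  refine ⟨hα_pos, ((∫ y, P3 u y) * log 2 + ∫ y, P3 u y * log⁺ ‖y‖⁻¹) / (2 * π ^ 2), 2,
    two_pos, fun x hx => ?_⟩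
  have hbound := integral_mul_log_norm_sub_div_norm_le (P3_nonneg u) hmass.integrable_P3 hx
  rw [log_mul two_ne_zero (by positivity)] at hbound
  calc 1 / (2 * π ^ 2) * ∫ y, P3 u y * log (‖x - y‖ / ‖y‖)
      ≤ 1 / (2 * π ^ 2) *
          ((∫ y, P3 u y) * (log 2 + log ‖x‖) + ∫ y, P3 u y * log⁺ ‖y‖⁻¹) := by gcongr
    _ = _ := by rw [hα]; ring

theorem stmt5 (p : ℝ) (hp : 0 < p) (u v : E3 → ℝ)
    (hsol : IsSolution3 p u v)
    (hu_nonneg : ∀ x : E3, 0 ≤ u x)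
    (hmass : FiniteMass3 u)
    (α : ℝ) (hα : α = 1 / (2 * Real.pi ^ 2) * (∫ y : E3, P3 u y)) :
    0 < α ∧
    ∃ C R : ℝ, 0 < R ∧ ∀ x : E3, R ≤ ‖x‖ →
      1 / (2 * Real.pi ^ 2) * (∫ y : E3, P3 u y * Real.log (‖x - y‖ / ‖y‖)) ≤
        α * Real.log ‖x‖ + C :=
  stmt5_general p u v hsol hmass α hα
end
end

section
/- Let n = 3 or n = 4. Let f : ℝⁿ → ℝ be a nonnegative C¹ function, and let K ≥ L > 0 be such that there exist C₀ > 0 and R₀ > 0 with f(z) ≤ C₀·|z|^{−K} for all |z| ≥ R₀. Fix x ∈ ℝⁿ and p > 0. For λ > 0 define f_{x,λ}(ξ) := (λ/|ξ−x|)^L · f(x + λ²(ξ−x)/|ξ−x|²) for ξ ≠ x. Then there exist constants I_x > 0 and λ_x > 0 (depending on x, f, K, L, p but not on λ) such that for every λ > λ_x: ∫_{B(x,λ)} f_{x,λ}(z)^p dz ≤ I_x · λ^{2n−Lp}. -/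
open MeasureTheory Filter Topology

noncomputable section

/-- The Kelvin-type transform `f_{x,λ}(ξ) = (λ/|ξ−x|)^L f(x + λ²(ξ−x)/|ξ−x|²)`. -/
def kelvin {n : ℕ} (f : EuclideanSpace ℝ (Fin n) → ℝ) (L : ℝ)
    (x : EuclideanSpace ℝ (Fin n)) (lam : ℝ) (ξ : EuclideanSpace ℝ (Fin n)) : ℝ :=
  (lam / ‖ξ - x‖) ^ L * f (x + (lam ^ 2 / ‖ξ - x‖ ^ 2) • (ξ - x))

theorem stmt18 (n : ℕ) (hn : n = 3 ∨ n = 4)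
    (f : EuclideanSpace ℝ (Fin n) → ℝ)
    (hf_nonneg : ∀ z, 0 ≤ f z) (hf_C1 : ContDiff ℝ 1 f)
    (K L : ℝ) (hL : 0 < L) (hKL : L ≤ K)
    (C₀ R₀ : ℝ) (hC₀ : 0 < C₀) (hR₀ : 0 < R₀)
    (hdecay : ∀ z, R₀ ≤ ‖z‖ → f z ≤ C₀ * ‖z‖ ^ (-K))
    (x : EuclideanSpace ℝ (Fin n)) (p : ℝ) (hp : 0 < p) :
    ∃ Ix lamx : ℝ, 0 < Ix ∧ 0 < lamx ∧
      ∀ lam : ℝ, lamx < lam →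
        (∫⁻ z in Metric.ball x lam, ENNReal.ofReal (kelvin f L x lam z ^ p)) ≤
          ENNReal.ofReal (Ix * lam ^ (2 * (n : ℝ) - L * p)) := by
  have hn1 : 1 ≤ n := by rcases hn with h | h <;> omega
  have : Nontrivial (EuclideanSpace ℝ (Fin n)) := by
    rcases hn with h | h <;> subst h <;> infer_instance
  set V : ℝ := (volume (Metric.ball (0 : EuclideanSpace ℝ (Fin n)) 1)).toReal with hV
  have hVne : volume (Metric.ball (0 : EuclideanSpace ℝ (Fin n)) 1) ≠ ⊤ :=
    measure_ball_lt_top.ne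
  have hVpos : 0 < V :=
    ENNReal.toReal_pos (Metric.measure_ball_pos volume 0 one_pos).ne' hVne
  refine ⟨C₀ ^ p * 2 ^ (L * p) * V, 2 + 2 * ‖x‖ + R₀, by positivity, by positivity, ?_⟩
  intro lam hlam
  have hxn : (0:ℝ) ≤ ‖x‖ := norm_nonneg x
  have hlam2 : 2 ≤ lam := by linarith
  have hlam0 : 0 < lam := by linarith
  have hlam1 : 1 ≤ lam := by linarith
  -- pointwise bound
  have key : ∀ z ∈ Metric.ball x lam,
      kelvin f L x lam z ^ p ≤ C₀ ^ p * (2 / lam) ^ (L * p) := by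
    intro z hz
    have hr : ‖z - x‖ < lam := by
      rw [Metric.mem_ball, dist_eq_norm] at hz; exact hz
    rcases eq_or_lt_of_le (norm_nonneg (z - x)) with h0 | h0
    · have : kelvin f L x lam z = 0 := by
        rw [kelvin, ← h0, div_zero, Real.zero_rpow hL.ne', zero_mul]
      rw [this, Real.zero_rpow hp.ne']
      positivity
    · set r : ℝ := ‖z - x‖ with hrdef
      set y := x + (lam ^ 2 / ‖z - x‖ ^ 2) • (z - x) with hy
      have hyx : ‖y - x‖ = lam ^ 2 / r := by
        rw [hy, add_sub_cancel_left, norm_smul, Real.norm_eq_abs, abs_of_pos (by positivity)]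
        rw [← hrdef]
        field_simp
      have hub : lam ^ 2 / r ≤ ‖y‖ + ‖x‖ := by
        calc lam ^ 2 / r = ‖y - x‖ := hyx.symm
          _ ≤ ‖y‖ + ‖x‖ := norm_sub_le y x
      have hlr : lam ≤ lam ^ 2 / r := by
        rw [le_div_iff₀ h0]; nlinarith
      have hdd : lam ^ 2 / r = 2 * (lam ^ 2 / (2 * r)) := by
        field_simp
      have hx2 : ‖x‖ ≤ lam / 2 := by linarith
      have hhalf : lam / 2 ≤ lam ^ 2 / (2 * r) := by
        rw [div_le_div_iff₀ (by norm_num) (by positivity)]; nlinarith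
      have hyR : R₀ ≤ ‖y‖ := by nlinarith
      have hylow : lam ^ 2 / (2 * r) ≤ ‖y‖ := by linarith
      have hy1 : 1 ≤ ‖y‖ := by linarith
      have hKL' : ‖y‖ ^ (-K) ≤ ‖y‖ ^ (-L) :=
        Real.rpow_le_rpow_of_exponent_le hy1 (by linarith)
      have h2' : ‖y‖ ^ (-L) ≤ (lam ^ 2 / (2 * r)) ^ (-L) :=
        Real.rpow_le_rpow_of_nonpos (by positivity) hylow (by linarith)
      have hfy : f y ≤ C₀ * (lam ^ 2 / (2 * r)) ^ (-L) :=
        (hdecay y hyR).trans (mul_le_mul_of_nonneg_left (hKL'.trans h2') hC₀.le)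
      have hApos : (0:ℝ) ≤ (lam / r) ^ L := Real.rpow_nonneg (by positivity) _
      have hmul : lam / r * (2 * r / lam ^ 2) = 2 / lam := by
        field_simp
      have hneg : (lam ^ 2 / (2 * r)) ^ (-L) = (2 * r / lam ^ 2) ^ L := by
        rw [Real.rpow_neg (by positivity), ← Real.inv_rpow (by positivity), inv_div]
      have hk : kelvin f L x lam z ≤ C₀ * (2 / lam) ^ L := by
        rw [kelvin]
        show (lam / r) ^ L * f y ≤ _
        calc (lam / r) ^ L * f y
            ≤ (lam / r) ^ L * (C₀ * (lam ^ 2 / (2 * r)) ^ (-L)) :=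
              mul_le_mul_of_nonneg_left hfy hApos
          _ = C₀ * ((lam / r) ^ L * (2 * r / lam ^ 2) ^ L) := by rw [hneg]; ring
          _ = C₀ * (2 / lam) ^ L := by
              rw [← Real.mul_rpow (by positivity) (by positivity), hmul]
      calc kelvin f L x lam z ^ p ≤ (C₀ * (2 / lam) ^ L) ^ p := by
            apply Real.rpow_le_rpow _ hk hp.le
            rw [kelvin]
            exact mul_nonneg (Real.rpow_nonneg (div_nonneg hlam0.le (norm_nonneg _)) _)
              (hf_nonneg _)
        _ = C₀ ^ p * (2 / lam) ^ (L * p) := by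
            rw [Real.mul_rpow hC₀.le (Real.rpow_nonneg (by positivity) L),
              ← Real.rpow_mul (by positivity)]
  -- integrate
  have hball : volume (Metric.ball x lam) =
      ENNReal.ofReal (lam ^ n) * ENNReal.ofReal V := by
    rw [Measure.addHaar_ball volume x hlam0.le, finrank_euclideanSpace_fin,
      hV, ENNReal.ofReal_toReal hVne]
  calc (∫⁻ z in Metric.ball x lam, ENNReal.ofReal (kelvin f L x lam z ^ p))
      ≤ ∫⁻ _ in Metric.ball x lam, ENNReal.ofReal (C₀ ^ p * (2 / lam) ^ (L * p)) :=
        setLIntegral_mono measurable_const fun z hz => ENNReal.ofReal_le_ofReal (key z hz)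
    _ = ENNReal.ofReal (C₀ ^ p * (2 / lam) ^ (L * p)) * volume (Metric.ball x lam) :=
        setLIntegral_const _ _
    _ = ENNReal.ofReal (C₀ ^ p * (2 / lam) ^ (L * p) * (lam ^ n * V)) := by
        rw [hball, ← ENNReal.ofReal_mul (by positivity), ← ENNReal.ofReal_mul (by positivity),
          mul_assoc]
    _ ≤ ENNReal.ofReal (C₀ ^ p * 2 ^ (L * p) * V * lam ^ (2 * (n : ℝ) - L * p)) := by
        apply ENNReal.ofReal_le_ofReal
        have h1 : (2 / lam) ^ (L * p) = 2 ^ (L * p) * lam ^ (-(L * p)) := by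
          rw [Real.div_rpow (by norm_num) hlam0.le, Real.rpow_neg hlam0.le, div_eq_mul_inv]
        have h2 : (lam : ℝ) ^ n = lam ^ ((n : ℝ)) := (Real.rpow_natCast lam n).symm
        have h3 : lam ^ (-(L * p)) * lam ^ ((n : ℝ)) = lam ^ ((n : ℝ) - L * p) := by
          rw [← Real.rpow_add hlam0]; ring_nf
        have h4 : lam ^ ((n : ℝ) - L * p) ≤ lam ^ (2 * (n : ℝ) - L * p) := by
          apply Real.rpow_le_rpow_of_exponent_le hlam1
          have : (1 : ℝ) ≤ (n : ℝ) := by exact_mod_cast hn1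
          linarith
        calc C₀ ^ p * (2 / lam) ^ (L * p) * (lam ^ n * V)
            = C₀ ^ p * 2 ^ (L * p) * V * (lam ^ (-(L * p)) * lam ^ ((n : ℝ))) := by
              rw [h1, h2]; ring
          _ = C₀ ^ p * 2 ^ (L * p) * V * lam ^ ((n : ℝ) - L * p) := by rw [h3]
          _ ≤ C₀ ^ p * 2 ^ (L * p) * V * lam ^ (2 * (n : ℝ) - L * p) := by
              gcongr
end
end
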